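/- Let s_1, ..., s_r be complex numbers with arguments in [0, φ], φ ∈ [0, π/2], satisfying |Σ_{i=1}^r s_i| ≤ C' and |s_i| > δ·C_min for every i, where C' < C_min/δ and δ > 0. Then r ≤ ⌊(1/δ²)·sec(φ/2)⌋. -/

import Mathlib

/-!
Rotating by `e^{-iφ/2}` puts every `s_i` within angle `φ/2` of the positive real axis, so
`Re(e^{-iφ/2} s_i) ≥ |s_i| cos(φ/2)`; summing gives `cos(φ/2) Σ |s_i| ≤ |Σ s_i| ≤ C'`.
Each of the `r` terms exceeds `δ C_min`, so `r δ C_min cos(φ/2) < C_min / δ`, i.e.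
`r < sec(φ/2) / δ²`.
-/

open Complex

namespace Complex

theorem re_exp_neg_mul_I_mul (z : ℂ) (θ : ℝ) :
    (exp (-θ * I) * z).re = ‖z‖ * Real.cos (z.arg - θ) := by
  have hrot : exp (-θ * I) * z = ‖z‖ * exp (↑(z.arg - θ) * I) := by
    conv_lhs => rw [← norm_mul_exp_arg_mul_I z]
    rw [mul_left_comm, ← exp_add]
    push_cast
    ring_nf
  rw [hrot, re_ofReal_mul, exp_ofReal_mul_I_re]

theorem norm_mul_cos_le_re_exp_neg_mul_I_mul {z : ℂ} {θ α : ℝ} (hz : |z.arg - θ| ≤ α)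
    (hα : α ≤ Real.pi) : ‖z‖ * Real.cos α ≤ (exp (-θ * I) * z).re := by
  rw [re_exp_neg_mul_I_mul, ← Real.cos_abs (z.arg - θ)]
  exact mul_le_mul_of_nonneg_left
    (Real.cos_le_cos_of_nonneg_of_le_pi (abs_nonneg _) hα hz) (norm_nonneg z)

theorem cos_mul_sum_norm_le_norm_sum {ι : Type*} (t : Finset ι) (s : ι → ℂ) {θ α : ℝ}
    (hs : ∀ i ∈ t, |(s i).arg - θ| ≤ α) (hα : α ≤ Real.pi) :
    Real.cos α * ∑ i ∈ t, ‖s i‖ ≤ ‖∑ i ∈ t, s i‖ :=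
  calc Real.cos α * ∑ i ∈ t, ‖s i‖
      = ∑ i ∈ t, ‖s i‖ * Real.cos α := by rw [Finset.mul_sum]; simp_rw [mul_comm]
    _ ≤ ∑ i ∈ t, (exp (-θ * I) * s i).re :=
        Finset.sum_le_sum fun i hi => norm_mul_cos_le_re_exp_neg_mul_I_mul (hs i hi) hα
    _ = (exp (-θ * I) * ∑ i ∈ t, s i).re := by rw [Finset.mul_sum, re_sum]
    _ ≤ ‖exp (-θ * I) * ∑ i ∈ t, s i‖ := re_le_norm _
    _ = ‖∑ i ∈ t, s i‖ := by rw [norm_mul, ← ofReal_neg, norm_exp_ofReal_mul_I, one_mul]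

end Complex

theorem large_demand_counting (r : ℕ) (s : Fin r → ℂ) (φ δ C' Cmin : ℝ)
    (hφ0 : 0 ≤ φ) (hφ : φ ≤ Real.pi / 2) (hδ : 0 < δ) (hCmin : 0 < Cmin)
    (harg : ∀ i, 0 ≤ (s i).arg ∧ (s i).arg ≤ φ)
    (hsum : ‖∑ i, s i‖ ≤ C')
    (hlarge : ∀ i, δ * Cmin < ‖s i‖)
    (hC' : C' < Cmin / δ) :
    (r : ℤ) ≤ ⌊(1 / δ ^ 2) * (1 / Real.cos (φ / 2))⌋ := by
  have hcos : 0 < Real.cos (φ / 2) :=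
    Real.cos_pos_of_mem_Ioo ⟨by linarith [Real.pi_pos], by linarith [Real.pi_pos]⟩
  have hsector : ∀ i ∈ Finset.univ, |(s i).arg - φ / 2| ≤ φ / 2 := fun i _ =>
    abs_le.2 ⟨by linarith [(harg i).1], by linarith [(harg i).2]⟩
  have hsecant := cos_mul_sum_norm_le_norm_sum Finset.univ s hsector (by linarith)
  have hcount : r * (δ * Cmin) ≤ ∑ i, ‖s i‖ := by
    simpa using Finset.card_nsmul_le_sum Finset.univ (‖s ·‖) _ fun i _ => (hlarge i).le
  have hbound : r * (δ * Cmin) * Real.cos (φ / 2) < Cmin / δ :=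
    calc r * (δ * Cmin) * Real.cos (φ / 2)
        ≤ Real.cos (φ / 2) * ∑ i, ‖s i‖ := by rw [mul_comm]; gcongr
      _ ≤ C' := hsecant.trans hsum
      _ < Cmin / δ := hC'
  rw [lt_div_iff₀ hδ] at hbound
  rw [Int.le_floor, Int.cast_natCast, one_div_mul_one_div,
    le_div_iff₀ (by positivity)]
  nlinarith
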